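/- arXiv:1009.4364 — 3 statements merged into one kernel-verified Lean document; each statement's English description precedes it below -/
import Mathlib

section
/- Let n ≥ 2 and let S_{n,2} = F_n/(F_n)'' be the free metabelian group of rank n, the quotient of the free group F_n of rank n by its second derived subgroup (S_{n,2} is finitely generated by the images of the free generators). For every integer m ≥ 1, there is a 2-generated subgroup H of S_{n,2} whose distortion function satisfies Δ_H^{S_{n,2}}(l) ⪰ l^m. -/
/-!
Let `a, b` be two free generators, `u = ⁅⋯⁅a, b⁆, ⋯, b⁆` with `m` commutators, and `H = ⟨u, b⟩`.
Because the group is metabelian, the `m`-fold commutator `w l` of `a` with `b ^ l` lies in `H`,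
while its word length in the whole group is `O(l)`. The map onto `ℤ wr ℤ = ℤ[t^±1] ⋊ ℤ` with
`a ↦ δ₀`, `b ↦ t` sends `H` into `(1 - t)^m ℤ[t^±1] ⋊ ℤ`, on which "divide the base coordinate by
`(1 - t)^m`, then evaluate at `t = 1`" is a homomorphism `ψ : H → ℤ`. The base coordinate of
`w l` is `(1 - t^l)^m = (1 - t)^m (1 + ⋯ + t^(l-1))^m`, so `ψ (w l) = l ^ m`; as `ψ` is Lipschitz
for the word metric of `H`, the `H`-length of `w l` is at least a constant times `l ^ m`.
-/

open scoped Pointwise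

namespace DistortionPaper

section Defs

variable (A B : Type*) [Group A] [Group B]

/-- The base group of the restricted wreath product: finitely supported functions `B → A`
under pointwise multiplication, as a subgroup of `B → A`. -/
def WreathBase : Subgroup (B → A) where
  carrier := {f | (Function.mulSupport f).Finite}
  one_mem' := by
    simp [Function.mulSupport_one]
  mul_mem' := by
    intro f g hf hg
    exact ((Set.Finite.union hf hg).subset (Function.mulSupport_mul f g))
  inv_mem' := by
    intro f hf
    simpa [Function.mulSupport_inv] using hf

/-- The shift automorphism of the base group: `(g ∘ f)(x) = f(x * g)`. -/
def wreathShift (g : B) : WreathBase A B ≃* WreathBase A B where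
  toFun f := ⟨fun x => (f : B → A) (x * g), by
    have h : Function.mulSupport (fun x => (f : B → A) (x * g))
        ⊆ (fun x : B => x * g) ⁻¹' Function.mulSupport (f : B → A) := fun x hx => hx
    exact (Set.Finite.preimage (Set.injOn_of_injective (mul_left_injective g)) f.2).subset h⟩
  invFun f := ⟨fun x => (f : B → A) (x * g⁻¹), by
    have h : Function.mulSupport (fun x => (f : B → A) (x * g⁻¹))
        ⊆ (fun x : B => x * g⁻¹) ⁻¹' Function.mulSupport (f : B → A) := fun x hx => hx
    exact (Set.Finite.preimage (Set.injOn_of_injective (mul_left_injective g⁻¹)) f.2).subset h⟩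
  left_inv f := Subtype.ext <| funext fun x => by simp [mul_assoc]
  right_inv f := Subtype.ext <| funext fun x => by simp [mul_assoc]
  map_mul' f₁ f₂ := Subtype.ext <| funext fun _ => rfl

/-- The action of `B` on the base group by shifts. -/
def wreathAction : B →* MulAut (WreathBase A B) where
  toFun g := wreathShift A B g
  map_one' := by
    refine MulEquiv.ext fun f => Subtype.ext <| funext fun x => ?_
    show (f : B → A) (x * 1) = (f : B → A) x
    rw [mul_one]
  map_mul' g₁ g₂ := by
    refine MulEquiv.ext fun f => Subtype.ext <| funext fun x => ?_
    show (f : B → A) (x * (g₁ * g₂)) = (f : B → A) (x * g₁ * g₂)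
    rw [mul_assoc]

/-- The restricted wreath product `A wr B`. -/
abbrev WreathProduct := WreathBase A B ⋊[wreathAction A B] B

/-- The element of the base group supported at `1 ∈ B` with value `a`. -/
noncomputable def toBase (a : A) : WreathBase A B := by
  classical
  exact ⟨fun x => if x = (1 : B) then a else 1, by
    apply Set.Finite.subset (Set.finite_singleton (1 : B))
    intro x hx
    simp only [Function.mem_mulSupport] at hx
    simp only [Set.mem_singleton_iff]
    by_contra hne
    rw [if_neg hne] at hx
    exact hx rfl⟩

/-- The canonical copy of `A` in `A wr B` (functions supported at `1`). -/
noncomputable def ofPassive (a : A) : WreathProduct A B :=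
  SemidirectProduct.inl (toBase A B a)

/-- The canonical copy of `B` in `A wr B`. -/
def ofActive (g : B) : WreathProduct A B := SemidirectProduct.inr g

/-- The generating set `S ∪ T` of `A wr B` obtained from generating sets `S` of `A`
and `T` of `B`. -/
def wreathGen (S : Set A) (T : Set B) : Set (WreathProduct A B) :=
  (fun a => ofPassive A B a) '' S ∪ (fun g => ofActive A B g) '' T

end Defs

/-- Word length of `g` with respect to the set `T`: the least `n` such that `g` is a
product of `n` elements of `T ∪ T⁻¹` (and `0` if no such `n` exists). -/
noncomputable def wordLength {G : Type*} [Group G] (T : Set G) (g : G) : ℕ :=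
  sInf {n | ∃ f : Fin n → G, (∀ i, f i ∈ T ∪ T⁻¹) ∧ (List.ofFn f).prod = g}

/-- The distortion function of a subgroup `H` of `G`, where `T` is a generating set of `G`
and `S` a generating set of `H`. -/
noncomputable def distortion {G : Type*} [Group G] (T : Set G) (H : Subgroup G)
    (S : Set H) (l : ℕ) : ℕ :=
  sSup (wordLength S '' {h : H | wordLength T (h : G) ≤ l})

/-- `f ⪯ g` : there is `C > 0` with `f l ≤ C * g (C * l)` for all `l`. -/
def Dominates (f g : ℕ → ℕ) : Prop := ∃ C : ℕ, 0 < C ∧ ∀ l, f l ≤ C * g (C * l)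

/-- `f ≈ g` : `f ⪯ g` and `g ⪯ f`. -/
def DistEquiv (f g : ℕ → ℕ) : Prop := Dominates f g ∧ Dominates g f

/-- A subgroup is subnormal if there is a finite chain from it to the whole group,
each term normal in the next. -/
def IsSubnormal {G : Type*} [Group G] (H : Subgroup G) : Prop :=
  ∃ (n : ℕ) (c : ℕ → Subgroup G), c 0 = H ∧ c n = ⊤ ∧
    ∀ i < n, c i ≤ c (i + 1) ∧ ∀ x ∈ c (i + 1), ∀ h ∈ c i, x * h * x⁻¹ ∈ c i

/-- `ℤ` as a multiplicative group. -/
abbrev Mℤ := Multiplicative ℤ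

/-- The wreath product `ℤ wr ℤ`. -/
abbrev ZwrZ := WreathProduct Mℤ Mℤ

/-- The standard generator `a` of `ℤ wr ℤ` (passive copy, supported at `1`). -/
noncomputable def aZ : ZwrZ := ofPassive Mℤ Mℤ (Multiplicative.ofAdd 1)

/-- The standard generator `b` of `ℤ wr ℤ` (active copy). -/
def bZ : ZwrZ := ofActive Mℤ Mℤ (Multiplicative.ofAdd 1)


instance (n : ℕ) : (derivedSeries (FreeGroup (Fin n)) 2).Normal :=
  derivedSeries_normal _ 2

/-- The free metabelian group of rank `n`: the free group modulo its second derived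
subgroup. -/
abbrev FreeMetabelian (n : ℕ) :=
  FreeGroup (Fin n) ⧸ derivedSeries (FreeGroup (Fin n)) 2

open scoped commutatorElement

section WordLength

variable {G : Type*} [Group G] {T : Set G}

theorem wordLength_le_length (L : List G) (hL : ∀ x ∈ L, x ∈ T ∪ T⁻¹) :
    wordLength T L.prod ≤ L.length :=
  Nat.sInf_le ⟨L.get, fun i => hL _ (L.get_mem i), congrArg List.prod (List.ofFn_get L)⟩

theorem exists_list_length_eq_wordLength (hT : Subgroup.closure T = ⊤) (g : G) :
    ∃ L : List G, L.length = wordLength T g ∧ (∀ x ∈ L, x ∈ T ∪ T⁻¹) ∧ L.prod = g := by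
  have hg : g ∈ Subgroup.closure T := hT ▸ Subgroup.mem_top g
  rw [← Subgroup.mem_toSubmonoid, Subgroup.closure_toSubmonoid] at hg
  obtain ⟨L, hLT, hLg⟩ := Submonoid.exists_list_of_mem_closure hg
  obtain ⟨f, hfT, hfg⟩ : wordLength T g ∈ {n | ∃ f : Fin n → G, (∀ i, f i ∈ T ∪ T⁻¹) ∧
      (List.ofFn f).prod = g} :=
    Nat.sInf_mem ⟨L.length, L.get, fun i => hLT _ (L.get_mem i),
      (congrArg List.prod (List.ofFn_get L)).trans hLg⟩
  exact ⟨List.ofFn f, List.length_ofFn, by simpa [List.forall_mem_ofFn_iff] using hfT, hfg⟩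

theorem wordLength_mul_le (hT : Subgroup.closure T = ⊤) (g h : G) :
    wordLength T (g * h) ≤ wordLength T g + wordLength T h := by
  obtain ⟨L, hL, hLT, rfl⟩ := exists_list_length_eq_wordLength hT g
  obtain ⟨M, hM, hMT, rfl⟩ := exists_list_length_eq_wordLength hT h
  rw [← hL, ← hM, ← List.length_append, ← List.prod_append]
  exact wordLength_le_length _ fun x hx => (List.mem_append.1 hx).elim (hLT x) (hMT x)

theorem wordLength_inv_le (hT : Subgroup.closure T = ⊤) (g : G) :
    wordLength T g⁻¹ ≤ wordLength T g := by
  obtain ⟨L, hL, hLT, rfl⟩ := exists_list_length_eq_wordLength hT g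
  have := wordLength_le_length (T := T) (L.map (·⁻¹)).reverse <| by
    simp only [List.mem_reverse, List.mem_map]
    rintro _ ⟨x, hx, rfl⟩
    simpa [or_comm] using hLT x hx
  simpa [← hL, List.prod_inv_reverse] using this

theorem wordLength_pow_le (hT : Subgroup.closure T = ⊤) (g : G) (k : ℕ) :
    wordLength T (g ^ k) ≤ k * wordLength T g := by
  induction k with
  | zero => simpa using wordLength_le_length (T := T) [] (by simp)
  | succ k ih =>
    rw [pow_succ, Nat.succ_mul]
    exact (wordLength_mul_le hT _ _).trans (Nat.add_le_add_right ih _)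

theorem wordLength_commutatorElement_le (hT : Subgroup.closure T = ⊤) (g h : G) :
    wordLength T ⁅g, h⁆ ≤ 2 * wordLength T g + 2 * wordLength T h := by
  have := wordLength_mul_le hT (g * h * g⁻¹) h⁻¹
  have := wordLength_mul_le hT (g * h) g⁻¹
  have := wordLength_mul_le hT g h
  have := wordLength_inv_le hT g
  have := wordLength_inv_le hT h
  rw [commutatorElement_def]
  omega

theorem wordLength_iterate_commutatorElement_le (hT : Subgroup.closure T = ⊤) (a c : G)
    (k : ℕ) : wordLength T ((fun z => ⁅z, c⁆)^[k] a) ≤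
      4 ^ k * (wordLength T a + wordLength T c) := by
  induction k with
  | zero => simp
  | succ k ih =>
    have h4 : 1 ≤ 4 ^ k := Nat.one_le_pow _ _ (by norm_num)
    rw [Function.iterate_succ_apply', pow_succ]
    refine (wordLength_commutatorElement_le hT _ c).trans ?_
    nlinarith

theorem finite_setOf_wordLength_le (hT : Subgroup.closure T = ⊤) (hTf : T.Finite) (L : ℕ) :
    {g : G | wordLength T g ≤ L}.Finite := by
  have : Finite ↥(T ∪ T⁻¹) := (hTf.union hTf.inv).to_subtype
  refine ((List.finite_length_le _ L).image
    fun M : List ↥(T ∪ T⁻¹) => (M.map Subtype.val).prod).subset ?_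
  intro g hg
  obtain ⟨M, hM, hMT, rfl⟩ := exists_list_length_eq_wordLength hT g
  have hML : M.length ≤ L := hM ▸ hg
  lift M to List ↥(T ∪ T⁻¹) using hMT
  exact ⟨M, by simpa using hML, rfl⟩

theorem natAbs_toAdd_le_wordLength_mul (hT : Subgroup.closure T = ⊤)
    (ψ : G →* Multiplicative ℤ) {E : ℕ} (hE : ∀ t ∈ T, (ψ t).toAdd.natAbs ≤ E) (g : G) :
    (ψ g).toAdd.natAbs ≤ wordLength T g * E := by
  obtain ⟨L, hL, hLT, rfl⟩ := exists_list_length_eq_wordLength hT g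
  rw [← hL]
  clear hL
  induction L with
  | nil => simp
  | cons x L ih =>
    have hx : (ψ x).toAdd.natAbs ≤ E := by
      rcases hLT x List.mem_cons_self with h | h
      · exact hE x h
      · simpa using hE _ h
    have := ih fun y hy => hLT y (List.mem_cons_of_mem x hy)
    have := Int.natAbs_add_le (ψ x).toAdd (ψ L.prod).toAdd
    rw [List.prod_cons, map_mul, toAdd_mul, List.length_cons, add_mul, one_mul]
    omega

theorem wordLength_le_distortion {H : Subgroup G} (S : Set H) (hT : Subgroup.closure T = ⊤)
    (hTf : T.Finite) {L : ℕ} {h : H} (hh : wordLength T (h : G) ≤ L) :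
    wordLength S h ≤ distortion T H S L :=
  le_csSup (((finite_setOf_wordLength_le hT hTf L).preimage
    Subtype.val_injective.injOn).image _).bddAbove ⟨h, hh, rfl⟩

theorem dominates_pow_distortion_of_hom {H : Subgroup G} {S : Set H} {m : ℕ} (hm : m ≠ 0)
    (hT : Subgroup.closure T = ⊤) (hTf : T.Finite) (hS : Subgroup.closure S = ⊤)
    (hSf : S.Finite) (ψ : H →* Multiplicative ℤ) (w : ℕ → H) (C : ℕ)
    (hwT : ∀ l, 1 ≤ l → wordLength T (w l : G) ≤ C * l)
    (hψw : ∀ l, ψ (w l) = Multiplicative.ofAdd ((l : ℤ) ^ m)) :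
    Dominates (fun l => l ^ m) (distortion T H S) := by
  obtain ⟨E, hE⟩ := (hSf.image fun s => (ψ s).toAdd.natAbs).bddAbove
  refine ⟨C + E + 1, by omega, fun l => ?_⟩
  rcases Nat.eq_zero_or_pos l with rfl | hl
  · simp [hm]
  have hw := wordLength_le_distortion S hT hTf (L := (C + E + 1) * l)
    ((hwT l hl).trans (Nat.mul_le_mul_right _ (by omega)))
  calc l ^ m = (ψ (w l)).toAdd.natAbs := by simp [hψw, Int.natAbs_pow]
    _ ≤ wordLength S (w l) * E :=
      natAbs_toAdd_le_wordLength_mul hS ψ (fun s hs => hE ⟨s, hs, rfl⟩) _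
    _ ≤ distortion T H S ((C + E + 1) * l) * (C + E + 1) := Nat.mul_le_mul hw (by omega)
    _ = _ := mul_comm _ _

end WordLength

section Metabelian

variable {G : Type*} [Group G]

theorem commute_of_mem_derivedSeries_one (hG : derivedSeries G 2 = ⊥) {x y : G}
    (hx : x ∈ derivedSeries G 1) (hy : y ∈ derivedSeries G 1) : Commute x y := by
  have : ⁅x, y⁆ ∈ derivedSeries G 2 :=
    (derivedSeries_succ G 1).ge (Subgroup.commutator_mem_commutator hx hy)
  rwa [hG, Subgroup.mem_bot, commutatorElement_eq_one_iff_commute] at this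

theorem commutatorElement_mem_derivedSeries_one (x y : G) : ⁅x, y⁆ ∈ derivedSeries G 1 := by
  rw [derivedSeries_one]
  exact Subgroup.commutator_mem_commutator (Subgroup.mem_top x) (Subgroup.mem_top y)

theorem map_iterate_commutatorElement {H : Type*} [Group H] (π : G →* H) (a c : G) (k : ℕ) :
    π ((fun z => ⁅z, c⁆)^[k] a) = (fun z => ⁅z, π c⁆)^[k] (π a) :=
  Function.Semiconj.iterate_right (f := π) (fun z => map_commutatorElement π z c) k a

def zpowersConjClosure (b z : G) : Subgroup G :=
  Subgroup.closure (Set.range fun i : ℤ => b ^ i * z * (b ^ i)⁻¹)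

theorem mem_zpowersConjClosure_self (b z : G) : z ∈ zpowersConjClosure b z :=
  Subgroup.subset_closure ⟨0, by simp⟩

theorem zpow_conj_mem_zpowersConjClosure {b z x : G} (j : ℤ)
    (hx : x ∈ zpowersConjClosure b z) : b ^ j * x * (b ^ j)⁻¹ ∈ zpowersConjClosure b z := by
  have : zpowersConjClosure b z ≤
      (zpowersConjClosure b z).comap (MulAut.conj (b ^ j)).toMonoidHom := by
    rw [zpowersConjClosure, Subgroup.closure_le]
    rintro _ ⟨i, rfl⟩
    refine Subgroup.subset_closure ⟨j + i, ?_⟩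
    show b ^ (j + i) * z * (b ^ (j + i))⁻¹ = b ^ j * (b ^ i * z * (b ^ i)⁻¹) * (b ^ j)⁻¹
    rw [zpow_add]
    group
  exact this hx

theorem zpowersConjClosure_le_closure (b z : G) :
    zpowersConjClosure b z ≤ Subgroup.closure {z, b} := by
  rw [zpowersConjClosure, Subgroup.closure_le]
  rintro _ ⟨i, rfl⟩
  have hb : b ∈ Subgroup.closure {z, b} := Subgroup.subset_closure (by simp)
  have hz : z ∈ Subgroup.closure {z, b} := Subgroup.subset_closure (by simp)
  exact mul_mem (mul_mem (zpow_mem hb i) hz) (inv_mem (zpow_mem hb i))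

theorem zpowersConjClosure_le_of_mem {N : Subgroup G} (hN : N.Normal) (b : G) {z : G}
    (hz : z ∈ N) : zpowersConjClosure b z ≤ N := by
  rw [zpowersConjClosure, Subgroup.closure_le]
  rintro _ ⟨i, rfl⟩
  exact hN.conj_mem z hz (b ^ i)

theorem commutatorElement_pow_mem_zpowersConjClosure (z b : G) (l : ℕ) :
    ⁅z, b ^ l⁆ ∈ zpowersConjClosure b ⁅z, b⁆ := by
  induction l with
  | zero => simp
  | succ l ih =>
    have : ⁅z, b ^ (l + 1)⁆ = ⁅z, b⁆ * (b ^ (1 : ℤ) * ⁅z, b ^ l⁆ * (b ^ (1 : ℤ))⁻¹) := by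
      simp only [commutatorElement_def, pow_succ', zpow_one]
      group
    rw [this]
    exact mul_mem (mem_zpowersConjClosure_self b _) (zpow_conj_mem_zpowersConjClosure 1 ih)

/-- In a metabelian group `z ↦ ⁅z, c⁆` is a homomorphism on the derived subgroup. -/
theorem commutatorElement_pow_mem_of_mem_zpowersConjClosure (hG : derivedSeries G 2 = ⊥)
    {b w z : G} (hw : w ∈ derivedSeries G 1) (hz : z ∈ zpowersConjClosure b w) (l : ℕ) :
    ⁅z, b ^ l⁆ ∈ zpowersConjClosure b ⁅w, b⁆ := by
  have hsub := zpowersConjClosure_le_of_mem (derivedSeries_normal G 1) b hw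
  have hsub' := zpowersConjClosure_le_of_mem (derivedSeries_normal G 1) b
    (commutatorElement_mem_derivedSeries_one w b)
  induction hz using Subgroup.closure_induction with
  | mem _ hx =>
    obtain ⟨i, rfl⟩ := hx
    have : ⁅b ^ i * w * (b ^ i)⁻¹, b ^ l⁆ = b ^ i * ⁅w, b ^ l⁆ * (b ^ i)⁻¹ := by
      have hcomm : Commute (b ^ i) (b ^ l) := ((Commute.refl b).zpow_left i).pow_right l
      conv_lhs => rw [← hcomm.mul_inv_cancel]
      simp only [commutatorElement_def]
      group
    rw [this]
    exact zpow_conj_mem_zpowersConjClosure i (commutatorElement_pow_mem_zpowersConjClosure w b l)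
  | one => simp
  | mul x y hx hy ihx ihy =>
    have hcomm := commute_of_mem_derivedSeries_one hG (hsub hx) (hsub' ihy)
    have : ⁅x * y, b ^ l⁆ = x * ⁅y, b ^ l⁆ * x⁻¹ * ⁅x, b ^ l⁆ := by
      simp only [commutatorElement_def]
      group
    rw [this, hcomm.mul_inv_cancel]
    exact mul_mem ihy ihx
  | inv x hx ihx =>
    have hcomm := commute_of_mem_derivedSeries_one hG (inv_mem (hsub hx)) (inv_mem (hsub' ihx))
    have : ⁅x⁻¹, b ^ l⁆ = x⁻¹ * ⁅x, b ^ l⁆⁻¹ * x⁻¹⁻¹ := by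
      simp only [commutatorElement_def]
      group
    rw [this, hcomm.mul_inv_cancel]
    exact inv_mem ihx

theorem iterate_commutatorElement_pow_mem (hG : derivedSeries G 2 = ⊥) (a b : G) (l k : ℕ) :
    (fun z => ⁅z, b ^ l⁆)^[k] a ∈ zpowersConjClosure b ((fun z => ⁅z, b⁆)^[k] a) := by
  induction k with
  | zero => exact mem_zpowersConjClosure_self b a
  | succ k ih =>
    rw [Function.iterate_succ_apply', Function.iterate_succ_apply']
    cases k with
    | zero => exact commutatorElement_pow_mem_zpowersConjClosure a b l
    | succ k =>
      refine commutatorElement_pow_mem_of_mem_zpowersConjClosure hG ?_ ih l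
      rw [Function.iterate_succ_apply']
      exact commutatorElement_mem_derivedSeries_one _ _

end Metabelian

section SemidirectProduct

open SemidirectProduct

variable {N G : Type*} [Group N] [Group G] {φ : G →* MulAut N}

theorem commutatorElement_inl_inr (n : N) (g : G) :
    ⁅(inl n : N ⋊[φ] G), (inr g : N ⋊[φ] G)⁆ = inl (n * (φ g n)⁻¹) := by
  ext <;> simp [commutatorElement_def]

theorem iterate_commutatorElement_inl_inr (n : N) (g : G) (k : ℕ) :
    (fun x => ⁅x, (inr g : N ⋊[φ] G)⁆)^[k] (inl n) = inl ((fun n => n * (φ g n)⁻¹)^[k] n) :=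
  (Function.Semiconj.iterate_right (fun n => (commutatorElement_inl_inr (φ := φ) n g).symm)
    k n).symm

def leftMemRange (D : N →* N) (hD : ∀ g n, D (φ g n) = φ g (D n)) :
    Subgroup (N ⋊[φ] G) where
  carrier := {x | x.left ∈ D.range}
  one_mem' := ⟨1, map_one D⟩
  mul_mem' := by
    rintro x y ⟨n, hn⟩ ⟨n', hn'⟩
    exact ⟨n * φ x.right n', by rw [map_mul, hD, hn, hn']; rfl⟩
  inv_mem' := by
    rintro x ⟨n, hn⟩
    exact ⟨φ x.right⁻¹ n⁻¹, by rw [hD, map_inv D, hn]; rfl⟩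

variable {M : Type*} [Group M] {D : N →* N} {hD : ∀ g n, D (φ g n) = φ g (D n)}

noncomputable def leftMemRange.preimageHom (σ : N →* M) (hσ : ∀ g n, σ (φ g n) = σ n)
    (hDinj : Function.Injective D) : leftMemRange D hD →* M where
  toFun x := σ (Function.invFun D x.1.left)
  map_one' := by
    show σ (Function.invFun D 1) = 1
    rw [← map_one D, Function.leftInverse_invFun hDinj, map_one]
  map_mul' x y := by
    obtain ⟨n, hn⟩ := x.2
    obtain ⟨n', hn'⟩ := y.2
    have hxy : D (n * φ x.1.right n') = (x * y).1.left := by rw [map_mul, hD, hn, hn']; rfl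
    show σ (Function.invFun D (x * y).1.left) =
      σ (Function.invFun D x.1.left) * σ (Function.invFun D y.1.left)
    rw [← hxy, ← hn, ← hn']
    simp only [Function.leftInverse_invFun hDinj _]
    rw [map_mul, hσ]

theorem leftMemRange.preimageHom_eq_of_apply_eq (σ : N →* M) (hσ : ∀ g n, σ (φ g n) = σ n)
    (hDinj : Function.Injective D) (x : leftMemRange D hD) {k : N} (hk : D k = x.1.left) :
    preimageHom σ hσ hDinj x = σ k :=
  congrArg σ (hk ▸ Function.leftInverse_invFun hDinj k)

end SemidirectProduct

theorem derivedSeries_semidirectProduct_two_eq_bot {N G : Type*} [CommGroup N] [CommGroup G]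
    (φ : G →* MulAut N) : derivedSeries (N ⋊[φ] G) 2 = ⊥ := by
  have h1 : derivedSeries (N ⋊[φ] G) 1 ≤ (SemidirectProduct.inl : N →* N ⋊[φ] G).range := by
    rw [SemidirectProduct.range_inl_eq_ker_rightHom, derivedSeries_one]
    exact Abelianization.commutator_subset_ker _
  refine eq_bot_iff.2 ?_
  calc derivedSeries (N ⋊[φ] G) 2
      = ⁅derivedSeries (N ⋊[φ] G) 1, derivedSeries (N ⋊[φ] G) 1⁆ := derivedSeries_succ _ 1
    _ ≤ ⁅(SemidirectProduct.inl : N →* N ⋊[φ] G).range, SemidirectProduct.inl.range⁆ :=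
      Subgroup.commutator_mono h1 h1
    _ = ⊥ := Subgroup.commutator_self_eq_bot_iff.2 inferInstance

section WreathBase

variable {A B : Type*} [CommGroup A] [Group B]

theorem wreathAction_apply (g : B) (f : WreathBase A B) (x : B) :
    (wreathAction A B g f : B → A) x = (f : B → A) (x * g) := rfl

noncomputable def augmentation : WreathBase A B →* A where
  toFun f := ∏ᶠ x, (f : B → A) x
  map_one' := finprod_one
  map_mul' f g := finprod_mul_distrib f.2 g.2

theorem augmentation_wreathAction (g : B) (f : WreathBase A B) :
    augmentation (wreathAction A B g f) = augmentation f :=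
  finprod_eq_of_bijective (· * g) (Group.mulRight_bijective g) fun _ => rfl

theorem augmentation_toBase (a : A) : augmentation (toBase A B a) = a := by
  classical
  refine (finprod_eq_single _ 1 fun x hx => ?_).trans ?_ <;> simp [toBase, *]

/-- Multiplication by `1 - t` on the `ℤ[B]`-module of finitely supported functions `B → A`. -/
def diff (t : B) : WreathBase A B →* WreathBase A B :=
  MonoidHom.id _ / (wreathAction A B t).toMonoidHom

theorem diff_apply (t : B) (f : WreathBase A B) : diff t f = f / wreathAction A B t f := rfl

/-- Multiplication by `1 + t + ⋯ + t ^ (l - 1)`. -/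
def sumShifts (t : B) (l : ℕ) : WreathBase A B →* WreathBase A B :=
  ∏ i ∈ Finset.range l, (wreathAction A B (t ^ i)).toMonoidHom

theorem sumShifts_apply (t : B) (l : ℕ) (f : WreathBase A B) :
    sumShifts t l f = ∏ i ∈ Finset.range l, wreathAction A B (t ^ i) f :=
  MonoidHom.finsetProd_apply _ _ _

theorem augmentation_sumShifts (t : B) (l : ℕ) (f : WreathBase A B) :
    augmentation (sumShifts t l f) = augmentation f ^ l := by
  rw [sumShifts_apply, map_prod, Finset.prod_congr rfl fun i _ => augmentation_wreathAction _ f,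
    Finset.prod_const, Finset.card_range]

theorem augmentation_iterate_sumShifts (t : B) (l k : ℕ) (f : WreathBase A B) :
    augmentation ((sumShifts t l)^[k] f) = augmentation f ^ l ^ k := by
  induction k with
  | zero => simp
  | succ k ih => rw [Function.iterate_succ_apply', augmentation_sumShifts, ih, ← pow_mul, pow_succ]

/-- A fixed point of `t` has `t`-invariant finite support, which must be empty when `t` has
infinite order. -/
theorem diff_injective {t : B} (ht : ¬IsOfFinOrder t) : Function.Injective (diff (A := A) t) := by
  refine (injective_iff_map_eq_one _).2 fun f hf => ?_
  have hfix : ∀ k : ℕ, wreathAction A B (t ^ k) f = f := by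
    intro k
    induction k with
    | zero => simp
    | succ k ih =>
      rw [pow_succ', map_mul, MulAut.mul_apply, ih]
      exact (div_eq_one.1 hf).symm
  refine Subtype.ext (funext fun x => ?_)
  by_contra hx
  refine Set.infinite_of_injective_forall_mem
    ((mul_right_injective x).comp (injective_pow_iff_not_isOfFinOrder.2 ht)) (fun k => ?_) f.2
  show (f : B → A) (x * t ^ k) ≠ 1
  rwa [← wreathAction_apply, hfix]

end WreathBase

section WreathBaseComm

variable {A B : Type*} [CommGroup A] [CommGroup B]

theorem wreathAction_comm (g h : B) (f : WreathBase A B) :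
    wreathAction A B g (wreathAction A B h f) = wreathAction A B h (wreathAction A B g f) := by
  rw [← MulAut.mul_apply, ← map_mul, mul_comm, map_mul, MulAut.mul_apply]

theorem diff_wreathAction (t g : B) (f : WreathBase A B) :
    diff t (wreathAction A B g f) = wreathAction A B g (diff t f) := by
  rw [diff_apply, diff_apply, map_div, wreathAction_comm]

theorem diff_sumShifts (t s : B) (l : ℕ) (f : WreathBase A B) :
    diff t (sumShifts s l f) = sumShifts s l (diff t f) := by
  simp only [sumShifts_apply, map_prod, diff_wreathAction]

theorem diff_pow_apply (t : B) (l : ℕ) (f : WreathBase A B) :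
    diff (t ^ l) f = diff t (sumShifts t l f) := by
  have hstep : ∀ i : ℕ, diff t (wreathAction A B (t ^ i) f) =
      wreathAction A B (t ^ i) f / wreathAction A B (t ^ (i + 1)) f := fun i => by
    rw [diff_apply, ← MulAut.mul_apply, ← map_mul, pow_succ']
  rw [sumShifts_apply, map_prod, Finset.prod_congr rfl fun i _ => hstep i,
    Finset.prod_range_div', pow_zero, map_one, MulAut.one_apply, diff_apply]

theorem iterate_diff_pow (t : B) (l k : ℕ) (f : WreathBase A B) :
    (diff (t ^ l))^[k] f = (diff t)^[k] ((sumShifts t l)^[k] f) := by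
  have : ⇑(diff (A := A) (t ^ l)) = diff t ∘ sumShifts t l := funext (diff_pow_apply t l)
  rw [this, Function.Commute.comp_iterate (diff_sumShifts t t l)]
  rfl

/-- `(1 - t) ^ m`: the power is taken in `Monoid.End`, i.e. under composition; on `→*` into a
commutative group `^` would be the pointwise power. -/
def diffPow (t : B) (m : ℕ) : WreathBase A B →* WreathBase A B :=
  (show Monoid.End (WreathBase A B) from diff t) ^ m

theorem diffPow_apply (t : B) (m : ℕ) (f : WreathBase A B) : diffPow t m f = (diff t)^[m] f :=
  rfl

theorem diffPow_wreathAction (t : B) (m : ℕ) (g : B) (f : WreathBase A B) :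
    diffPow t m (wreathAction A B g f) = wreathAction A B g (diffPow t m f) :=
  Function.Commute.iterate_left (fun f => diff_wreathAction t g f) m f

theorem diffPow_injective {t : B} (ht : ¬IsOfFinOrder t) (m : ℕ) :
    Function.Injective (diffPow (A := A) t m) :=
  (diff_injective ht).iterate m

end WreathBaseComm

theorem not_isOfFinOrder_ofAdd_one : ¬IsOfFinOrder (Multiplicative.ofAdd (1 : ℤ)) :=
  injective_pow_iff_not_isOfFinOrder.1 fun i j h => by simpa [← ofAdd_nsmul] using h

theorem exists_hom_closure_iterate_commutatorElement {G : Type*} [Group G] (π : G →* ZwrZ)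
    {a b : G} (ha : π a = aZ) (hb : π b = bZ) (m : ℕ) :
    ∃ ψ : Subgroup.closure {(fun z => ⁅z, b⁆)^[m] a, b} →* Multiplicative ℤ,
      ∀ (l : ℕ) (hl : (fun z => ⁅z, b ^ l⁆)^[m] a ∈ Subgroup.closure {(fun z => ⁅z, b⁆)^[m] a, b}),
        ψ ⟨_, hl⟩ = Multiplicative.ofAdd ((l : ℤ) ^ m) := by
  set t : Mℤ := Multiplicative.ofAdd 1
  set δ : WreathBase Mℤ Mℤ := toBase Mℤ Mℤ t
  have hπw : ∀ l : ℕ, π ((fun z => ⁅z, b ^ l⁆)^[m] a) =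
      SemidirectProduct.inl ((diff (t ^ l))^[m] δ) := fun l => by
    rw [map_iterate_commutatorElement, map_pow, ha, hb, aZ, bZ, ofPassive, ofActive, ← map_pow,
      iterate_commutatorElement_inl_inr]
    rfl
  have hHK : Subgroup.closure {(fun z => ⁅z, b⁆)^[m] a, b} ≤
      (leftMemRange (diffPow t m) (diffPow_wreathAction t m)).comap π := by
    rw [Subgroup.closure_le]
    rintro x (rfl | rfl)
    · refine ⟨δ, ?_⟩
      simpa [diffPow_apply] using (congrArg SemidirectProduct.left (hπw 1)).symm
    · exact ⟨1, by simp [hb, bZ, ofActive]⟩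
  refine ⟨(leftMemRange.preimageHom (hD := diffPow_wreathAction t m) augmentation
    augmentation_wreathAction (diffPow_injective not_isOfFinOrder_ofAdd_one m)).comp
    ((π.comp (Subgroup.subtype _)).codRestrict _ fun h => hHK h.2), fun l hl => ?_⟩
  rw [MonoidHom.comp_apply, leftMemRange.preimageHom_eq_of_apply_eq (k := (sumShifts t l)^[m] δ),
    augmentation_iterate_sumShifts, augmentation_toBase, ← ofAdd_nsmul]
  · simp
  · show _ = (π ((fun z => ⁅z, b ^ l⁆)^[m] a)).left
    rw [hπw, diffPow_apply, ← iterate_diff_pow]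
    rfl

namespace FreeMetabelian

variable {n : ℕ}

def of (i : Fin n) : FreeMetabelian n := QuotientGroup.mk (FreeGroup.of i)

theorem derivedSeries_two_eq_bot : derivedSeries (FreeMetabelian n) 2 = ⊥ := by
  rw [← map_derivedSeries_eq (QuotientGroup.mk'_surjective _), Subgroup.map_eq_bot_iff,
    QuotientGroup.ker_mk']

theorem exists_hom {G : Type*} [Group G] (hG : derivedSeries G 2 = ⊥) (f : Fin n → G) :
    ∃ π : FreeMetabelian n →* G, ∀ i, π (of i) = f i := by
  refine ⟨QuotientGroup.lift _ (FreeGroup.lift f) fun x hx => ?_, fun i => ?_⟩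
  · rw [MonoidHom.mem_ker, ← Subgroup.mem_bot, ← hG]
    exact map_derivedSeries_le_derivedSeries _ 2 ⟨x, hx, rfl⟩
  · rw [of, QuotientGroup.lift_mk, FreeGroup.lift_apply_of]

end FreeMetabelian

/-- For every `m ≥ 1` there is a 2-generated subgroup `H` of the free
metabelian group of rank `n ≥ 2` with distortion `⪰ l^m`. -/
theorem statement3 (n : ℕ) (hn : 2 ≤ n) (m : ℕ) (hm : 1 ≤ m) :
    ∃ (H : Subgroup (FreeMetabelian n)) (x y : FreeMetabelian n),
      H = Subgroup.closure {x, y} ∧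
      ∀ (T : Set (FreeMetabelian n)) (S : Set H),
        T.Finite → Subgroup.closure T = ⊤ → S.Finite → Subgroup.closure S = ⊤ →
        Dominates (fun l => l ^ m) (distortion T H S) := by
  set a := FreeMetabelian.of (⟨0, by omega⟩ : Fin n)
  set b := FreeMetabelian.of (⟨1, by omega⟩ : Fin n)
  refine ⟨_, (fun z => ⁅z, b⁆)^[m] a, b, rfl, fun T S hTf hT hSf hS => ?_⟩
  obtain ⟨π, hπ⟩ := FreeMetabelian.exists_hom (derivedSeries_semidirectProduct_two_eq_bot _)
    fun i : Fin n => if (i : ℕ) = 0 then aZ else bZ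
  obtain ⟨ψ, hψ⟩ := exists_hom_closure_iterate_commutatorElement π
    (by simpa using hπ ⟨0, by omega⟩) (by simpa using hπ ⟨1, by omega⟩) m
  have hw : ∀ l : ℕ, (fun z => ⁅z, b ^ l⁆)^[m] a ∈ Subgroup.closure {(fun z => ⁅z, b⁆)^[m] a, b} :=
    fun l => zpowersConjClosure_le_closure _ _
      (iterate_commutatorElement_pow_mem FreeMetabelian.derivedSeries_two_eq_bot a b l m)
  refine dominates_pow_distortion_of_hom (by omega) hT hTf hS hSf ψ (fun l => ⟨_, hw l⟩)
    (4 ^ m * (wordLength T a + wordLength T b)) (fun l hl => ?_) (fun l => hψ l (hw l))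
  have hbl := wordLength_pow_le hT b l
  calc wordLength T ((fun z => ⁅z, b ^ l⁆)^[m] a)
      ≤ 4 ^ m * (wordLength T a + wordLength T (b ^ l)) :=
        wordLength_iterate_commutatorElement_le hT a (b ^ l) m
    _ ≤ 4 ^ m * (wordLength T a + wordLength T b) * l := by
      rw [mul_assoc]
      gcongr
      nlinarith

end DistortionPaper
end

section
/- For integers k ≥ 2 and l ≥ 2, the free solvable group S_{k,l} = F_k / F_k^{(l)} — the quotient of the free group F_k of rank k by the l-th term of its derived series — contains a subgroup isomorphic to the wreath product ℤ wr ℤ. -/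
/-!
Let `G` be a free group that is not solvable, so it has two distinct free generators `x ≠ y`,
and let `Q = G / G''`. Since `Q'` is abelian, `b ↦ x` and `δₙ ↦ x⁻ⁿ ⁅x, y⁆ xⁿ` (where `δₙ` is
the base element supported at `n`) define a homomorphism `ψ : ℤ wr ℤ → Q`. Sending `x ↦ b` and
every other generator to `a` gives `χ : Q → ℤ wr ℤ` (`ℤ wr ℤ` is metabelian). With the base group
identified with `ℤ[T;T⁻¹]`, the composite `χ ∘ ψ` fixes `b` and multiplies the base by `T⁻¹ - 1`,
which is injective because `ℤ[T;T⁻¹]` is a domain; hence `ψ` is injective. For `S_{k,l}` apply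
this to `H = F_k^{(l-2)}`: it is free by Nielsen–Schreier, not solvable, and `H / H''` embeds in
`F_k / F_k^{(l)}` since `H'' = F_k^{(l)}`.
-/

open scoped Pointwise

namespace DistortionPaper

instance (k l : ℕ) : (derivedSeries (FreeGroup (Fin k)) l).Normal :=
  derivedSeries_normal _ l

/-- The free solvable group `S_{k,l}` of rank `k` and derived length `l`. -/
abbrev FreeSolvable (k l : ℕ) :=
  FreeGroup (Fin k) ⧸ derivedSeries (FreeGroup (Fin k)) l

end DistortionPaper

open Function Multiplicative AddMonoidAlgebra
open scoped commutatorElement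

section IntegralGroupRing

variable {M N A : Type*} [Monoid N] [CommGroup A]

theorem AddMonoidAlgebra.mulHom_ext_int {f g : Multiplicative (AddMonoidAlgebra ℤ M) →* N}
    (h : ∀ m, f (ofAdd (single m 1)) = g (ofAdd (single m 1))) : f = g :=
  AddMonoidHom.toMultiplicativeLeft.symm.injective <|
    addHom_ext' fun m => AddMonoidHom.ext_int (h m)

noncomputable def AddMonoidAlgebra.intLift (c : M → A) :
    Multiplicative (AddMonoidAlgebra ℤ M) →* A :=
  AddMonoidHom.toMultiplicativeLeft <|
    (Finsupp.liftAddHom fun m => zmultiplesHom _ (Additive.ofMul (c m))).comp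
      coeffAddEquiv.toAddMonoidHom

@[simp]
theorem AddMonoidAlgebra.intLift_single (c : M → A) (m : M) :
    intLift c (ofAdd (single m 1)) = c m := by
  simp [intLift, coeffAddEquiv]

end IntegralGroupRing

namespace SemidirectProduct

theorem injective_of_map_inl_of_map_inr {N N' G : Type*} [Group N] [Group N']
    [Group G] {φ : G →* MulAut N} {φ' : G →* MulAut N'} (f : N ⋊[φ] G →* N' ⋊[φ'] G)
    {d : N →* N'} (hd : Injective d) (hl : ∀ n, f (inl n) = inl (d n))
    (hr : ∀ g, f (inr g) = inr g) : Injective f := by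
  refine (injective_iff_map_eq_one f).mpr fun x hx => ?_
  rw [← inl_left_mul_inr_right x, map_mul, hl, hr] at hx
  have hright : x.right = 1 := by simpa using congrArg rightHom hx
  rw [hright, map_one, mul_one, map_eq_one_iff _ inl_injective, map_eq_one_iff _ hd] at hx
  rw [← inl_left_mul_inr_right x, hx, hright, map_one, map_one, mul_one]

theorem derivedSeries_two_eq_bot {N G : Type*} [Group N] [Group G] [IsMulCommutative N]
    [IsMulCommutative G] {φ : G →* MulAut N} : derivedSeries (N ⋊[φ] G) 2 = ⊥ := by
  have hcomm : derivedSeries (N ⋊[φ] G) 1 ≤ (inl : N →* N ⋊[φ] G).range := by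
    rw [derivedSeries_one, range_inl_eq_ker_rightHom, commutator_def, Subgroup.commutator_le]
    intro g₁ _ g₂ _
    rw [MonoidHom.mem_ker, map_commutatorElement, commutatorElement_eq_one_iff_mul_comm, mul_comm']
  rw [derivedSeries_succ, eq_bot_iff, Subgroup.commutator_le]
  intro g₁ hg₁ g₂ hg₂
  obtain ⟨n₁, rfl⟩ := hcomm hg₁
  obtain ⟨n₂, rfl⟩ := hcomm hg₂
  rw [← map_commutatorElement, commutatorElement_eq_one_iff_mul_comm.mpr (mul_comm' n₁ n₂), map_one]
  exact Subgroup.one_mem _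

end SemidirectProduct

section DerivedSeries

variable {G : Type*} [Group G]

theorem map_subtype_derivedSeries_derivedSeries (n m : ℕ) :
    (derivedSeries (derivedSeries G n) m).map (derivedSeries G n).subtype =
      derivedSeries G (n + m) := by
  induction m with
  | zero => rw [derivedSeries_zero, ← MonoidHom.range_eq_map, Subgroup.range_subtype]; rfl
  | succ m ih =>
    rw [derivedSeries_succ, Subgroup.map_commutator, ih, ← add_assoc, derivedSeries_succ]

theorem isSolvable_of_isSolvable_derivedSeries (n : ℕ) [Group.IsSolvable (derivedSeries G n)] :
    Group.IsSolvable G := by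
  obtain ⟨m, hm⟩ := (Group.isSolvable_def (derivedSeries G n)).mp ‹_›
  exact (Group.isSolvable_def G).mpr
    ⟨n + m, by rw [← map_subtype_derivedSeries_derivedSeries, hm, Subgroup.map_bot]⟩

theorem exists_injective_quotient_derivedSeries (n m : ℕ) :
    ∃ f : derivedSeries G n ⧸ derivedSeries (derivedSeries G n) m →* G ⧸ derivedSeries G (n + m),
      Injective f := by
  refine ⟨QuotientGroup.map _ _ _
    (Subgroup.map_le_iff_le_comap.mp (map_subtype_derivedSeries_derivedSeries n m).le), ?_⟩
  rw [← MonoidHom.ker_eq_bot_iff, QuotientGroup.ker_map, ← map_subtype_derivedSeries_derivedSeries,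
    Subgroup.comap_map_eq_self_of_injective (Subgroup.subtype_injective _),
    QuotientGroup.map_mk'_self]

instance isMulCommutative_commutator_quotient_derivedSeries_two :
    IsMulCommutative (commutator (G ⧸ derivedSeries G 2)) := by
  refine ⟨⟨fun a b => Subtype.ext ?_⟩⟩
  have hab : ⁅(a : G ⧸ derivedSeries G 2), (b : G ⧸ derivedSeries G 2)⁆ ∈
      derivedSeries (G ⧸ derivedSeries G 2) 2 := by
    rw [derivedSeries_succ (G ⧸ derivedSeries G 2) 1, derivedSeries_one]
    exact Subgroup.commutator_mem_commutator a.2 b.2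
  rw [← map_derivedSeries_eq (QuotientGroup.mk'_surjective _), Subgroup.mem_map] at hab
  obtain ⟨g, hg, hgab⟩ := hab
  rw [QuotientGroup.mk'_apply, (QuotientGroup.eq_one_iff g).mpr hg] at hgab
  exact commutatorElement_eq_one_iff_mul_comm.mp hgab.symm

end DerivedSeries

section FreeGroup

theorem FreeGroup.isSolvable_iff {X : Type*} : Group.IsSolvable (FreeGroup X) ↔ Subsingleton X := by
  constructor
  · intro hsolv
    by_contra hX
    classical
    obtain ⟨x, y, hxy⟩ := (not_subsingleton_iff_nontrivial.mp hX).exists_pair_ne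
    set σ : Equiv.Perm (Fin 5) := finRotate 5
    set τ : Equiv.Perm (Fin 5) := Equiv.swap 0 (σ 0)
    have hgen : Subgroup.closure {σ, τ} = ⊤ := Equiv.Perm.closure_cycle_adjacent_swap
      (isCycle_finRotate (n := 3)) (support_finRotate (n := 3)) 0
    let f : FreeGroup X →* Equiv.Perm (Fin 5) := FreeGroup.lift fun s => if s = x then σ else τ
    have hsurj : Surjective f := by
      rw [← MonoidHom.range_eq_top, eq_top_iff, ← hgen, Subgroup.closure_le]
      rintro _ (rfl | rfl)
      · exact ⟨FreeGroup.of x, by simp [f]⟩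
      · exact ⟨FreeGroup.of y, by simp [f, hxy.symm]⟩
    exact Equiv.Perm.not_isSolvable_fin_5 (Group.isSolvable_of_surjective hsurj)
  · intro hX
    cases isEmpty_or_nonempty X
    · infer_instance
    · have : Unique X := uniqueOfSubsingleton (Classical.arbitrary X)
      exact Group.isSolvable_of_comm mul_comm'

theorem IsFreeGroup.isSolvable_iff {G : Type*} [Group G] [IsFreeGroup G] :
    Group.IsSolvable G ↔ Subsingleton (IsFreeGroup.Generators G) := by
  rw [← FreeGroup.isSolvable_iff]
  exact ⟨fun _ => Group.isSolvable_of_surjective (f := (IsFreeGroup.toFreeGroup G).toMonoidHom)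
      (IsFreeGroup.toFreeGroup G).surjective,
    fun _ => Group.isSolvable_of_surjective (f := (IsFreeGroup.toFreeGroup G).symm.toMonoidHom)
      (IsFreeGroup.toFreeGroup G).symm.surjective⟩

end FreeGroup

namespace DistortionPaper

open SemidirectProduct LaurentPolynomial

section AddMonoidAlgebraModel

variable {R M : Type*} [Ring R] [AddCommGroup M]

noncomputable def addMonoidAlgebraEquivWreathBase :
    Multiplicative (AddMonoidAlgebra R M) ≃* WreathBase (Multiplicative R) (Multiplicative M) where
  toFun p := ⟨fun z => ofAdd (p.toAdd.coeff z.toAdd),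
    (p.toAdd.coeff.hasFiniteSupport.preimage toAdd.injective.injOn).subset fun _ hz =>
      mt (congrArg ofAdd) hz⟩
  invFun w := ofAdd (.ofCoeff (Finsupp.ofSupportFinite
    (fun m => ((w : Multiplicative M → Multiplicative R) (ofAdd m)).toAdd)
    ((w.2.preimage ofAdd.injective.injOn).subset fun _ hm => mt (congrArg ofAdd) hm)))
  left_inv p := by ext; rfl
  right_inv w := rfl
  map_mul' p q := rfl

theorem addMonoidAlgebraEquivWreathBase_apply (p : Multiplicative (AddMonoidAlgebra R M))
    (z : Multiplicative M) :
    (addMonoidAlgebraEquivWreathBase p : Multiplicative M → Multiplicative R) z =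
      ofAdd (p.toAdd.coeff z.toAdd) :=
  rfl

theorem wreathAction_addMonoidAlgebraEquivWreathBase (g : Multiplicative M)
    (p : Multiplicative (AddMonoidAlgebra R M)) :
    wreathAction _ _ g (addMonoidAlgebraEquivWreathBase p) =
      addMonoidAlgebraEquivWreathBase (ofAdd (single (-g.toAdd) 1 * p.toAdd)) := by
  ext z
  simp [addMonoidAlgebraEquivWreathBase_apply, wreathAction, wreathShift, add_comm]

theorem toBase_eq_addMonoidAlgebraEquivWreathBase (r : R) :
    toBase (Multiplicative R) (Multiplicative M) (ofAdd r) =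
      addMonoidAlgebraEquivWreathBase (ofAdd (single 0 r)) := by
  ext z
  by_cases hz : z = 1 <;> simp [addMonoidAlgebraEquivWreathBase_apply, toBase, hz]

end AddMonoidAlgebraModel

theorem wreathBase_hom_ext {M N : Type*} [AddCommGroup M] [Monoid N]
    {f g : WreathBase Mℤ (Multiplicative M) →* N}
    (h : ∀ m : M, f (addMonoidAlgebraEquivWreathBase (ofAdd (single m 1))) =
      g (addMonoidAlgebraEquivWreathBase (ofAdd (single m 1)))) : f = g := by
  have := mulHom_ext_int (f := f.comp addMonoidAlgebraEquivWreathBase.toMonoidHom)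
    (g := g.comp addMonoidAlgebraEquivWreathBase.toMonoidHom) h
  ext w
  simpa using DFunLike.congr_fun this (addMonoidAlgebraEquivWreathBase.symm w)

theorem bZ_zpow (n : ℤ) : bZ ^ n = inr (ofAdd n) := by
  rw [bZ, ofActive, ← map_zpow, ← ofAdd_zsmul, smul_eq_mul, mul_one]

theorem bZ_zpow_conj_inl (n : ℤ) (p : Multiplicative ℤ[T;T⁻¹]) :
    bZ ^ n * inl (addMonoidAlgebraEquivWreathBase p) * (bZ ^ n)⁻¹ =
      inl (addMonoidAlgebraEquivWreathBase (ofAdd (single (-n) 1 * p.toAdd))) := by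
  rw [bZ_zpow, ← map_inv, ← inl_aut, wreathAction_addMonoidAlgebraEquivWreathBase, toAdd_ofAdd]

theorem commutator_bZ_aZ :
    ⁅bZ, aZ⁆ = inl (addMonoidAlgebraEquivWreathBase (ofAdd (single (-1) 1 - single 0 1))) := by
  have := bZ_zpow_conj_inl 1 (ofAdd (single 0 1))
  rw [zpow_one] at this
  rw [commutatorElement_def, aZ, ofPassive, toBase_eq_addMonoidAlgebraEquivWreathBase, this,
    ← map_inv, ← map_mul, ← map_inv, ← map_mul, toAdd_ofAdd, single_mul_single]
  simp [sub_eq_add_neg]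

noncomputable def wreathBaseMulRight (q : ℤ[T;T⁻¹]) : WreathBase Mℤ Mℤ →* WreathBase Mℤ Mℤ :=
  (addMonoidAlgebraEquivWreathBase.toMonoidHom.comp (AddMonoidHom.mulRight q).toMultiplicative).comp
    addMonoidAlgebraEquivWreathBase.symm.toMonoidHom

theorem wreathBaseMulRight_apply (q : ℤ[T;T⁻¹]) (p : Multiplicative ℤ[T;T⁻¹]) :
    wreathBaseMulRight q (addMonoidAlgebraEquivWreathBase p) =
      addMonoidAlgebraEquivWreathBase (ofAdd (p.toAdd * q)) := by
  simp [wreathBaseMulRight]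

theorem wreathBaseMulRight_injective {q : ℤ[T;T⁻¹]} (hq : q ≠ 0) :
    Injective (wreathBaseMulRight q) :=
  addMonoidAlgebraEquivWreathBase.injective.comp <|
    (toAdd.injective.comp (ofAdd.injective.comp (mul_left_injective₀ hq))).comp
      addMonoidAlgebraEquivWreathBase.symm.injective

section MetabelianLift

open scoped IsMulCommutative

variable {Q : Type*} [Group Q] [IsMulCommutative (commutator Q)]

noncomputable def wreathLiftBase (u v : Q) : WreathBase Mℤ Mℤ →* Q :=
  (commutator Q).subtype.comp <|
    (intLift fun n : ℤ => (MulAut.conjNormal (u ^ (-n))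
      ⟨⁅u, v⁆, Subgroup.commutator_mem_commutator (Subgroup.mem_top u) (Subgroup.mem_top v)⟩ :
        commutator Q)).comp
      addMonoidAlgebraEquivWreathBase.symm.toMonoidHom

theorem wreathLiftBase_single (u v : Q) (n : ℤ) :
    wreathLiftBase u v (addMonoidAlgebraEquivWreathBase (ofAdd (single n 1))) =
      u ^ (-n) * ⁅u, v⁆ * (u ^ (-n))⁻¹ := by
  simp only [wreathLiftBase, MonoidHom.coe_comp, Function.comp_apply, MulEquiv.coe_toMonoidHom,
    MulEquiv.symm_apply_apply, intLift_single, Subgroup.coe_subtype,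
    MulAut.conjNormal_apply]

theorem wreathLiftBase_wreathAction (u v : Q) (g : Mℤ) :
    (wreathLiftBase u v).comp (wreathAction Mℤ Mℤ g).toMonoidHom =
      (MulAut.conj (zpowersHom Q u g)).toMonoidHom.comp (wreathLiftBase u v) := by
  refine wreathBase_hom_ext fun n => ?_
  simp only [MonoidHom.comp_apply, MulEquiv.coe_toMonoidHom,
    wreathAction_addMonoidAlgebraEquivWreathBase, toAdd_ofAdd, single_mul_single, mul_one,
    MulAut.conj_apply, wreathLiftBase_single, zpowersHom_apply]
  group

noncomputable def wreathLift (u v : Q) : ZwrZ →* Q :=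
  SemidirectProduct.lift (wreathLiftBase u v) (zpowersHom Q u) (wreathLiftBase_wreathAction u v)

theorem wreathLift_inr (u v : Q) (g : Mℤ) : wreathLift u v (inr g) = u ^ g.toAdd :=
  lift_inr ..

theorem wreathLift_inl_single (u v : Q) (n : ℤ) :
    wreathLift u v (inl (addMonoidAlgebraEquivWreathBase (ofAdd (single n 1)))) =
      u ^ (-n) * ⁅u, v⁆ * (u ^ (-n))⁻¹ :=
  (lift_inl ..).trans (wreathLiftBase_single u v n)

theorem wreathLift_injective (u v : Q) {χ : Q →* ZwrZ} (hu : χ u = bZ) (hv : χ v = aZ) :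
    Injective (wreathLift u v) := by
  set q : ℤ[T;T⁻¹] := single (-1) 1 - single 0 1
  have hq : q ≠ 0 := sub_ne_zero.mpr fun h =>
    absurd (Finsupp.single_left_injective one_ne_zero (congrArg coeff h)) (by norm_num)
  have hbase : (χ.comp (wreathLift u v)).comp inl = inl.comp (wreathBaseMulRight q) :=
    wreathBase_hom_ext fun n => by
      simp only [MonoidHom.comp_apply, wreathLift_inl_single, map_mul, map_inv, map_zpow,
        map_commutatorElement, hu, hv, commutator_bZ_aZ, bZ_zpow_conj_inl, neg_neg, toAdd_ofAdd,
        wreathBaseMulRight_apply]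
      rfl
  refine Injective.of_comp (f := χ) (injective_of_map_inl_of_map_inr (χ.comp (wreathLift u v))
    (wreathBaseMulRight_injective hq) (fun w => DFunLike.congr_fun hbase w) fun g => ?_)
  rw [MonoidHom.comp_apply, wreathLift_inr, map_zpow, hu, bZ_zpow, ofAdd_toAdd]

end MetabelianLift

theorem exists_injective_zwrZ_quotient_derivedSeries_two {G : Type*} [Group G] [IsFreeGroup G]
    (hG : ¬Group.IsSolvable G) : ∃ f : ZwrZ →* G ⧸ derivedSeries G 2, Injective f := by
  classical
  obtain ⟨x, y, hxy⟩ :=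
    (not_subsingleton_iff_nontrivial.mp (IsFreeGroup.isSolvable_iff.not.mp hG)).exists_pair_ne
  let χ : G →* ZwrZ := IsFreeGroup.lift fun s => if s = x then bZ else aZ
  have hχ : derivedSeries G 2 ≤ χ.ker := fun g hg => by
    have := map_derivedSeries_le_derivedSeries χ 2 ⟨g, hg, rfl⟩
    rwa [derivedSeries_two_eq_bot, Subgroup.mem_bot] at this
  exact ⟨wreathLift ((IsFreeGroup.of x : G) : G ⧸ derivedSeries G 2) (IsFreeGroup.of y : G),
    wreathLift_injective _ _ (χ := QuotientGroup.lift _ χ hχ)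
      (by rw [QuotientGroup.lift_mk, IsFreeGroup.lift_of, if_pos rfl])
      (by rw [QuotientGroup.lift_mk, IsFreeGroup.lift_of, if_neg hxy.symm])⟩

/-- For `k ≥ 2` and `l ≥ 2`, the free solvable group `S_{k,l}` contains a
subgroup isomorphic to `ℤ wr ℤ`. -/
theorem statement9 (k l : ℕ) (hk : 2 ≤ k) (hl : 2 ≤ l) :
    ∃ H : Subgroup (FreeSolvable k l), Nonempty (H ≃* ZwrZ) := by
  obtain ⟨n, rfl⟩ : ∃ n, l = n + 2 := ⟨l - 2, by omega⟩
  have hF : ¬Group.IsSolvable (FreeGroup (Fin k)) := by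
    rw [FreeGroup.isSolvable_iff, not_subsingleton_iff_nontrivial]
    exact Fin.nontrivial_iff_two_le.mpr hk
  have hH : ¬Group.IsSolvable (derivedSeries (FreeGroup (Fin k)) n) := fun _ =>
    hF (isSolvable_of_isSolvable_derivedSeries n)
  obtain ⟨f, hf⟩ := exists_injective_zwrZ_quotient_derivedSeries_two hH
  obtain ⟨g, hg⟩ := exists_injective_quotient_derivedSeries (G := FreeGroup (Fin k)) n 2
  have hgf : Injective (g.comp f) := hg.comp hf
  exact ⟨(g.comp f).range, ⟨(MonoidHom.ofInjective hgf).symm⟩⟩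

end DistortionPaper
end

section
/- Let ℤ wr ℤ = W ⋊ ⟨b⟩ with standard generators a, b, and let w be any nontrivial element of the base group W. Then the assignment a ↦ w, b ↦ b extends to an injective homomorphism from ℤ wr ℤ onto the subgroup ⟨b, w⟩; in particular, every subgroup of ℤ wr ℤ of the form ⟨b, w⟩ with w ∈ W, w ≠ 1, is isomorphic to ℤ wr ℤ. -/
open scoped Pointwise

namespace SemidirectProduct

variable {N₁ G₁ N₂ G₂ : Type*} [Group N₁] [Group G₁] [Group N₂] [Group G₂]
  {φ₁ : G₁ →* MulAut N₁} {φ₂ : G₂ →* MulAut N₂} {fn : N₁ →* N₂} {fg : G₁ →* G₂}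
  {h : ∀ g : G₁, fn.comp (φ₁ g).toMonoidHom = (φ₂ (fg g)).toMonoidHom.comp fn}

theorem map_injective (hn : Function.Injective fn) (hg : Function.Injective fg) :
    Function.Injective (map fn fg h) := fun _ _ hxy =>
  SemidirectProduct.ext (hn congr(($hxy).left)) (hg congr(($hxy).right))

end SemidirectProduct

namespace DistortionPaper

section GroupRingModel

open AddMonoidAlgebra

variable {R G : Type*} [Ring R] [AddGroup G]

noncomputable def wreathBaseEquiv :
    WreathBase (Multiplicative R) (Multiplicative G) ≃* Multiplicative R[G] where
  toFun f := .ofAdd <| ofCoeff <| Finsupp.ofSupportFinite (fun x => (f.1 (.ofAdd x)).toAdd)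
    (f.2.preimage Multiplicative.ofAdd.injective.injOn)
  invFun p := ⟨fun x => .ofAdd (p.toAdd.coeff x.toAdd),
    p.toAdd.coeff.hasFiniteSupport.preimage Multiplicative.toAdd.injective.injOn⟩
  left_inv _ := rfl
  right_inv _ := by
    apply Multiplicative.toAdd.injective
    ext
    rfl
  map_mul' _ _ := by
    apply Multiplicative.toAdd.injective
    ext
    rfl

@[simp]
theorem coeff_toAdd_wreathBaseEquiv (f : WreathBase (Multiplicative R) (Multiplicative G))
    (x : G) : (wreathBaseEquiv f).toAdd.coeff x = (f.1 (.ofAdd x)).toAdd := by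
  with_unfolding_all rfl

theorem toAdd_wreathBaseEquiv_wreathAction (g : Multiplicative G)
    (f : WreathBase (Multiplicative R) (Multiplicative G)) :
    (wreathBaseEquiv (wreathAction _ _ g f)).toAdd
      = (wreathBaseEquiv f).toAdd * single (-g.toAdd) 1 := by
  ext x
  simp only [coeff_toAdd_wreathBaseEquiv, coeff_mul_single_apply, neg_neg, mul_one]
  rfl

theorem toAdd_wreathBaseEquiv_toBase (c : Multiplicative R) :
    (wreathBaseEquiv (toBase _ (Multiplicative G) c)).toAdd = single 0 c.toAdd := by
  ext x
  rcases eq_or_ne x 0 with rfl | hx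
  · simp [toBase]
  · simp [toBase, hx]

noncomputable def baseMulLeft (p : R[G]) :
    WreathBase (Multiplicative R) (Multiplicative G) →*
      WreathBase (Multiplicative R) (Multiplicative G) :=
  wreathBaseEquiv.symm.toMonoidHom.comp
    ((AddMonoidHom.mulLeft p).toMultiplicative.comp wreathBaseEquiv.toMonoidHom)

@[simp]
theorem baseMulLeft_wreathBaseEquiv_symm (p q : R[G]) :
    baseMulLeft p (wreathBaseEquiv.symm (.ofAdd q)) = wreathBaseEquiv.symm (.ofAdd (p * q)) := by
  simp [baseMulLeft]

@[simp]
theorem toAdd_wreathBaseEquiv_baseMulLeft (p : R[G])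
    (f : WreathBase (Multiplicative R) (Multiplicative G)) :
    (wreathBaseEquiv (baseMulLeft p f)).toAdd = p * (wreathBaseEquiv f).toAdd := by
  simp [baseMulLeft]

theorem baseMulLeft_wreathAction (p : R[G]) (g : Multiplicative G)
    (f : WreathBase (Multiplicative R) (Multiplicative G)) :
    baseMulLeft p (wreathAction _ _ g f) = wreathAction _ _ g (baseMulLeft p f) := by
  apply wreathBaseEquiv.injective
  apply Multiplicative.toAdd.injective
  simp only [toAdd_wreathBaseEquiv_baseMulLeft, toAdd_wreathBaseEquiv_wreathAction, mul_assoc]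

theorem baseMulLeft_injective {p : R[G]} (hp : IsLeftRegular p) :
    Function.Injective (baseMulLeft p) := fun f f' h =>
  wreathBaseEquiv.injective <| Multiplicative.toAdd.injective <|
    hp <| by simpa using congr((wreathBaseEquiv $h).toAdd)

noncomputable def wreathMulLeft (p : R[G]) :
    WreathProduct (Multiplicative R) (Multiplicative G) →*
      WreathProduct (Multiplicative R) (Multiplicative G) :=
  SemidirectProduct.map (baseMulLeft p) (MonoidHom.id _) fun g =>
    MonoidHom.ext (baseMulLeft_wreathAction p g)

theorem wreathMulLeft_injective {p : R[G]} (hp : IsLeftRegular p) :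
    Function.Injective (wreathMulLeft p) :=
  SemidirectProduct.map_injective (baseMulLeft_injective hp) Function.injective_id

theorem ofPassive_eq_inl_single (c : Multiplicative R) :
    ofPassive _ (Multiplicative G) c
      = SemidirectProduct.inl (wreathBaseEquiv.symm (.ofAdd (single 0 c.toAdd))) := by
  rw [ofPassive]
  congr 1
  rw [MulEquiv.eq_symm_apply, ← toAdd_wreathBaseEquiv_toBase, ofAdd_toAdd]

theorem wreathMulLeft_ofPassive_one (p : R[G]) :
    wreathMulLeft p (ofPassive _ _ (.ofAdd 1))
      = SemidirectProduct.inl (wreathBaseEquiv.symm (.ofAdd p)) := by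
  simp [wreathMulLeft, ofPassive_eq_inl_single, ← one_def]

theorem wreathMulLeft_ofActive (p : R[G]) (g : Multiplicative G) :
    wreathMulLeft p (ofActive _ _ g) = ofActive _ _ g :=
  SemidirectProduct.map_inr _ _ _ g

theorem inl_wreathBaseEquiv_symm_mul_single (q : R[G]) (g : G) :
    (SemidirectProduct.inl (wreathBaseEquiv.symm (.ofAdd (q * single g 1))) :
        WreathProduct (Multiplicative R) (Multiplicative G))
      = ofActive _ _ (.ofAdd (-g)) * SemidirectProduct.inl (wreathBaseEquiv.symm (.ofAdd q))
          * (ofActive _ _ (.ofAdd (-g)))⁻¹ := by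
  rw [ofActive, ← map_inv, ← SemidirectProduct.inl_aut]
  congr 1
  apply wreathBaseEquiv.injective
  apply Multiplicative.toAdd.injective
  simp only [toAdd_wreathBaseEquiv_wreathAction, MulEquiv.apply_symm_apply, toAdd_ofAdd, neg_neg]

end GroupRingModel

section IntegralWreath

open AddMonoidAlgebra

theorem bZ_zpow_s11 (m : ℤ) : bZ ^ m = ofActive Mℤ Mℤ (.ofAdd m) := by
  rw [bZ, ofActive, ofActive, ← map_zpow, ← ofAdd_zsmul, smul_eq_mul, mul_one]

theorem aZ_zpow (k : ℤ) :
    aZ ^ k = SemidirectProduct.inl (wreathBaseEquiv.symm (.ofAdd (single 0 k))) := by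
  rw [aZ, ofPassive_eq_inl_single, ← map_zpow, ← map_zpow, ← ofAdd_zsmul, smul_single, toAdd_ofAdd,
    smul_eq_mul, mul_one]

theorem inl_mem_closure_aZ_bZ (f : WreathBase Mℤ Mℤ) :
    SemidirectProduct.inl f ∈ Subgroup.closure ({aZ, bZ} : Set ZwrZ) := by
  have ha : aZ ∈ Subgroup.closure ({aZ, bZ} : Set ZwrZ) := Subgroup.subset_closure (by simp)
  have hb : bZ ∈ Subgroup.closure ({aZ, bZ} : Set ZwrZ) := Subgroup.subset_closure (by simp)
  rw [← wreathBaseEquiv.symm_apply_apply f, ← ofAdd_toAdd (wreathBaseEquiv f)]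
  induction (wreathBaseEquiv f).toAdd using AddMonoidAlgebra.induction with
  | zero => simp
  | single_add m k q _ _ ih =>
    have hsingle : single m k = single 0 k * single m (1 : ℤ) := by
      rw [single_mul_single, zero_add, mul_one]
    rw [ofAdd_add, map_mul, map_mul, hsingle, inl_wreathBaseEquiv_symm_mul_single, ← aZ_zpow,
      ← bZ_zpow_s11]
    exact mul_mem (mul_mem (mul_mem (zpow_mem hb _) (zpow_mem ha _)) (inv_mem (zpow_mem hb _))) ih

theorem closure_aZ_bZ : Subgroup.closure ({aZ, bZ} : Set ZwrZ) = ⊤ := by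
  refine eq_top_iff.mpr fun x _ => ?_
  rw [← SemidirectProduct.inl_left_mul_inr_right x, ← ofAdd_toAdd x.right, ← ofActive, ← bZ_zpow_s11]
  exact mul_mem (inl_mem_closure_aZ_bZ _) (zpow_mem (Subgroup.subset_closure (by simp)) _)

end IntegralWreath

/-- For any nontrivial `w` in the base group of `ℤ wr ℤ`, the assignment
`a ↦ w`, `b ↦ b` extends to an injective endomorphism of `ℤ wr ℤ` with image `⟨b, w⟩`;
in particular `⟨b, w⟩ ≅ ℤ wr ℤ`. -/
theorem statement11 (w : WreathBase Mℤ Mℤ) (hw : w ≠ 1) :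
    ∃ φ : ZwrZ →* ZwrZ, Function.Injective φ ∧
      φ aZ = SemidirectProduct.inl w ∧ φ bZ = bZ ∧
      φ.range = Subgroup.closure {bZ, SemidirectProduct.inl w} := by
  set p := (wreathBaseEquiv w).toAdd
  have hp : IsLeftRegular p := mul_right_injective₀ (by simpa [p] using hw)
  have ha : wreathMulLeft p aZ = SemidirectProduct.inl w := by
    simp [aZ, wreathMulLeft_ofPassive_one, p]
  have hb : wreathMulLeft p bZ = bZ := wreathMulLeft_ofActive p _
  refine ⟨wreathMulLeft p, wreathMulLeft_injective hp, ha, hb, ?_⟩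
  rw [MonoidHom.range_eq_map, ← closure_aZ_bZ, MonoidHom.map_closure, Set.image_pair, ha, hb,
    Set.pair_comm]

end DistortionPaper
end
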